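/- Fix α > 0, and for r > 0 and x ∈ ℂ define I_r(x) := ∫_{−π}^{π} r / |r·e^{iθ} − x|^{2+α} dθ. Then there exists a constant a > 1, depending only on α, such that for all r > 0 and all x ∈ ℂ with |x| < r, a^{−1}·(r − |x|)^{−1−α} ≤ I_r(x) ≤ a·(r − |x|)^{−1−α}. -/

import Mathlib

/-- `I_r(x) = ∫_{−π}^{π} r/|r·e^{iθ} − x|^{2+α} dθ`. -/
noncomputable def Icirc (α : ℝ) (r : ℝ) (x : ℂ) : ℝ :=
  ∫ θ in (-Real.pi)..Real.pi,
    r / ‖(r : ℂ) * Complex.exp ((θ : ℂ) * Complex.I) - x‖ ^ (2 + α)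

/-!
After a rotation we may take `x = t ∈ [0, r)`. With `d = r - t`, the distance
`|r e^{iθ} - t|` is comparable to `d + r|θ|` on `[-π, π]`: it is at most this by the triangle
inequality through `r`, and at least `d`, hence at least a third of `d + |r e^{iθ} - r|`, which
Jordan's inequality bounds below by a multiple of `d + r|θ|`. So `I_r(t)` is comparable to
`∫_{-π}^{π} r (d + r|θ|)^{-2-α} dθ = (2 / (1 + α)) (d^{-1-α} - (d + rπ)^{-1-α})`, and since
`d + rπ ≥ (1 + π) d` this is comparable to `d^{-1-α}`.
-/

open Real MeasureTheory

theorem intervalIntegral.integral_comp_abs {f : ℝ → ℝ} {c : ℝ} (hc : 0 ≤ c)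
    (hf : IntervalIntegrable f volume 0 c) :
    ∫ x in -c..c, f |x| = 2 * ∫ x in 0..c, f x := by
  have habs : Set.EqOn (fun x => f |x|) f (Set.uIcc 0 c) := fun x hx => by
    simp only [abs_of_nonneg (Set.uIcc_of_le hc ▸ hx).1]
  have hint : IntervalIntegrable (fun x => f |x|) volume 0 c :=
    hf.congr (habs.symm.mono Set.uIoc_subset_uIcc)
  have hneg : ∫ x in -c..0, f |x| = ∫ x in 0..c, f |x| := by
    simpa using (integral_comp_neg (a := 0) (b := c) fun x => f |x|).symm
  rw [← integral_add_adjacent_intervals (b := 0) _ hint, hneg, integral_congr habs, two_mul]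
  simpa using ((IntervalIntegrable.iff_comp_neg).mp hint).symm

theorem dist_add_dist_le_three_mul {X : Type*} [PseudoMetricSpace X] {x u z : X}
    (h : dist u x ≤ dist z x) : dist u x + dist z u ≤ 3 * dist z x := by
  linarith [dist_triangle z x u, dist_comm x u]

theorem two_div_pi_mul_abs_le_norm_exp_I_mul_ofReal_sub_one {θ : ℝ} (hθ : |θ| ≤ π) :
    2 / π * |θ| ≤ ‖Complex.exp (Complex.I * θ) - 1‖ := by
  have hjordan := mul_le_sin (x := |θ| / 2) (by positivity) (by linarith)
  have hsin : sin (|θ| / 2) ≤ |sin (θ / 2)| := by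
    rcases abs_cases θ with ⟨h, -⟩ | ⟨h, -⟩ <;> rw [h]
    · exact le_abs_self _
    · rw [neg_div, sin_neg]; exact neg_le_abs _
  rw [Complex.norm_exp_I_mul_ofReal_sub_one, norm_mul, Real.norm_ofNat, Real.norm_eq_abs]
  linarith

section CircleDistance

variable {r t : ℝ}

theorem norm_ofReal_mul_exp_sub_ofReal (hr : 0 ≤ r) (θ : ℝ) :
    ‖(r : ℂ) * Complex.exp (θ * Complex.I) - r‖ = r * ‖Complex.exp (Complex.I * θ) - 1‖ := by
  rw [← mul_sub_one, norm_mul, Complex.norm_of_nonneg hr, mul_comm (θ : ℂ)]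

theorem sub_le_norm_ofReal_mul_exp_sub_ofReal (hr : 0 ≤ r) (ht : 0 ≤ t) (θ : ℝ) :
    r - t ≤ ‖(r : ℂ) * Complex.exp (θ * Complex.I) - t‖ := by
  simpa [abs_of_nonneg hr, abs_of_nonneg ht] using
    norm_sub_norm_le ((r : ℂ) * Complex.exp (θ * Complex.I)) t

theorem norm_ofReal_mul_exp_sub_ofReal_le (hr : 0 ≤ r) (htr : t ≤ r) (θ : ℝ) :
    ‖(r : ℂ) * Complex.exp (θ * Complex.I) - t‖ ≤ (r - t) + r * |θ| := by
  have hrt : ‖(r : ℂ) - t‖ = r - t := by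
    rw [← Complex.ofReal_sub, Complex.norm_of_nonneg (sub_nonneg.2 htr)]
  calc ‖(r : ℂ) * Complex.exp (θ * Complex.I) - t‖
      ≤ ‖(r : ℂ) * Complex.exp (θ * Complex.I) - r‖ + ‖(r : ℂ) - t‖ :=
        norm_sub_le_norm_sub_add_norm_sub _ _ _
    _ = r * ‖Complex.exp (Complex.I * θ) - 1‖ + (r - t) := by
        rw [norm_ofReal_mul_exp_sub_ofReal hr, hrt]
    _ ≤ (r - t) + r * |θ| := by
        have := mul_le_mul_of_nonneg_left (norm_exp_I_mul_ofReal_sub_one_le (x := θ)) hr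
        rw [Real.norm_eq_abs] at this
        linarith

theorem le_norm_ofReal_mul_exp_sub_ofReal {θ : ℝ} (ht : 0 ≤ t) (htr : t ≤ r) (hθ : |θ| ≤ π) :
    (r - t) + r * |θ| ≤ 3 * π / 2 * ‖(r : ℂ) * Complex.exp (θ * Complex.I) - t‖ := by
  have hr : 0 ≤ r := ht.trans htr
  have hrt : dist (r : ℂ) t = r - t := by
    rw [Complex.dist_eq, ← Complex.ofReal_sub, Complex.norm_of_nonneg (sub_nonneg.2 htr)]
  have hnear : dist (r : ℂ) t ≤ dist ((r : ℂ) * Complex.exp (θ * Complex.I)) t := by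
    rw [hrt, Complex.dist_eq]
    exact sub_le_norm_ofReal_mul_exp_sub_ofReal hr ht θ
  have hthree := dist_add_dist_le_three_mul hnear
  rw [hrt, Complex.dist_eq, Complex.dist_eq, norm_ofReal_mul_exp_sub_ofReal hr] at hthree
  have hθ' : |θ| ≤ π / 2 * ‖Complex.exp (Complex.I * θ) - 1‖ :=
    calc |θ| = π / 2 * (2 / π * |θ|) := by field_simp
      _ ≤ π / 2 * ‖Complex.exp (Complex.I * θ) - 1‖ := by
          gcongr
          exact two_div_pi_mul_abs_le_norm_exp_I_mul_ofReal_sub_one hθ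
  nlinarith [mul_le_mul_of_nonneg_left hθ' hr, pi_gt_three]

end CircleDistance

theorem Icirc_eq_Icirc_norm (α r : ℝ) (x : ℂ) : Icirc α r x = Icirc α r ‖x‖ := by
  set F : ℝ → ℝ := fun θ => r / ‖(r : ℂ) * Complex.exp (θ * Complex.I) - x‖ ^ (2 + α)
  have hF : Function.Periodic F (2 * π) := fun θ => by
    simp [F, add_mul, Complex.exp_add]
  have hrot (θ : ℝ) :
      F (θ + x.arg) = r / ‖(r : ℂ) * Complex.exp (θ * Complex.I) - (‖x‖ : ℂ)‖ ^ (2 + α) := by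
    have : (r : ℂ) * Complex.exp ((θ + x.arg : ℝ) * Complex.I) - x
        = Complex.exp (x.arg * Complex.I) * ((r : ℂ) * Complex.exp (θ * Complex.I) - ‖x‖) := by
      rw [mul_sub, mul_comm (Complex.exp _) (‖x‖ : ℂ), Complex.norm_mul_exp_arg_mul_I]
      push_cast
      rw [add_mul, Complex.exp_add]
      ring
    simp only [F, this, norm_mul, Complex.norm_exp_ofReal_mul_I, one_mul]
  calc Icirc α r x = ∫ θ in -π..π, F θ := rfl
    _ = ∫ θ in -π + x.arg..π + x.arg, F θ := by
        have := hF.intervalIntegral_add_eq (-π + x.arg) (-π)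
        rwa [show -π + x.arg + 2 * π = π + x.arg by ring, show -π + 2 * π = π by ring,
          eq_comm] at this
    _ = ∫ θ in -π..π, F (θ + x.arg) := (intervalIntegral.integral_comp_add_right F x.arg).symm
    _ = Icirc α r ‖x‖ := intervalIntegral.integral_congr fun θ _ => hrot θ

section ModelIntegral

variable {d r c p : ℝ}

theorem integral_div_add_mul_abs_rpow (hd : 0 < d) (hr : 0 < r) (hc : 0 ≤ c) (hp : p ≠ 1) :
    ∫ θ in -c..c, r / (d + r * |θ|) ^ p = 2 / (p - 1) * (d ^ (1 - p) - (d + r * c) ^ (1 - p)) := by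
  have hcont : ContinuousOn (fun y => r / (d + r * y) ^ p) (Set.uIcc 0 c) := by
    rw [Set.uIcc_of_le hc]
    refine continuousOn_const.div ?_ fun y hy => ?_
    · exact ContinuousOn.rpow_const (by fun_prop) fun y hy => Or.inl (by nlinarith [hy.1])
    · exact (rpow_pos_of_pos (by nlinarith [hy.1]) p).ne'
  have hrw : ∀ y ∈ Set.uIcc 0 c, r / (d + r * y) ^ p = r * (r * y + d) ^ (-p) := fun y hy => by
    rw [Set.uIcc_of_le hc] at hy
    rw [rpow_neg (by nlinarith [hy.1]), add_comm, div_eq_mul_inv]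
  rw [intervalIntegral.integral_comp_abs (f := fun y => r / (d + r * y) ^ p) hc
      hcont.intervalIntegrable, intervalIntegral.integral_congr hrw,
    intervalIntegral.integral_const_mul,
    intervalIntegral.integral_comp_mul_add (fun u => u ^ (-p)) hr.ne', integral_rpow]
  · have h1p : p - 1 ≠ 0 := sub_ne_zero.2 hp
    rw [smul_eq_mul, show -p + 1 = 1 - p by ring, mul_zero, zero_add, add_comm d]
    field_simp
    ring
  · refine Or.inr ⟨by contrapose! hp; linarith, fun h0 => ?_⟩
    rw [mul_zero, zero_add, Set.uIcc_of_le (by nlinarith)] at h0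
    exact hd.not_ge h0.1

theorem integral_div_add_mul_abs_rpow_bounds (hd : 0 < d) (hdr : d ≤ r) (hc : 0 ≤ c)
    (hp : 1 < p) :
    2 / (p - 1) * (1 - (1 + c) ^ (1 - p)) * d ^ (1 - p) ≤ ∫ θ in -c..c, r / (d + r * |θ|) ^ p ∧
      ∫ θ in -c..c, r / (d + r * |θ|) ^ p ≤ 2 / (p - 1) * d ^ (1 - p) := by
  rw [integral_div_add_mul_abs_rpow hd (hd.trans_le hdr) hc hp.ne']
  have hfar : (d + r * c) ^ (1 - p) ≤ (1 + c) ^ (1 - p) * d ^ (1 - p) := by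
    rw [← mul_rpow (by positivity) hd.le]
    exact rpow_le_rpow_of_nonpos (by positivity) (by nlinarith) (by linarith)
  have hpos : 0 ≤ (d + r * c) ^ (1 - p) := rpow_nonneg (by nlinarith) _
  have hp1 : 0 ≤ 2 / (p - 1) := div_nonneg zero_le_two (by linarith)
  constructor <;> nlinarith

end ModelIntegral

theorem div_rpow_bounds_of_le_of_le_mul {r p q h κ : ℝ} (hr : 0 ≤ r) (hp : 0 ≤ p) (hq : 0 < q)
    (hqh : q ≤ h) (hhq : h ≤ κ * q) :
    r / h ^ p ≤ r / q ^ p ∧ r / q ^ p ≤ κ ^ p * (r / h ^ p) := by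
  have hκ : 0 < κ := pos_of_mul_pos_left (hq.trans_le (hqh.trans hhq)) hq.le
  have hh : 0 < h := hq.trans_le hqh
  refine ⟨div_le_div_of_nonneg_left hr (by positivity) (rpow_le_rpow hq.le hqh hp), ?_⟩
  calc r / q ^ p = κ ^ p * (r / (κ * q) ^ p) := by
        rw [mul_rpow hκ.le hq.le]; field_simp
    _ ≤ κ ^ p * (r / h ^ p) := by gcongr

theorem Icirc_ofReal_bounds {α r t : ℝ} (hα : -1 < α) (ht : 0 ≤ t) (htr : t < r) :
    2 / (1 + α) * (1 - (1 + π) ^ (-(1 + α))) * (r - t) ^ (-(1 + α)) ≤ Icirc α r t ∧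
      Icirc α r t ≤ (3 * π / 2) ^ (2 + α) * (2 / (1 + α)) * (r - t) ^ (-(1 + α)) := by
  have hr : 0 ≤ r := ht.trans htr.le
  have hd : 0 < r - t := sub_pos.2 htr
  have hp : 0 ≤ 2 + α := by linarith
  set g : ℝ → ℝ := fun θ => r / ((r - t) + r * |θ|) ^ (2 + α)
  set f : ℝ → ℝ := fun θ => r / ‖(r : ℂ) * Complex.exp (θ * Complex.I) - t‖ ^ (2 + α)
  have hnorm_pos (θ : ℝ) : 0 < ‖(r : ℂ) * Complex.exp (θ * Complex.I) - t‖ :=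
    hd.trans_le (sub_le_norm_ofReal_mul_exp_sub_ofReal hr ht θ)
  have hf : Continuous f := continuous_const.div (by fun_prop (disch := exact hp))
    fun θ => (rpow_pos_of_pos (hnorm_pos θ) _).ne'
  have hg : Continuous g := continuous_const.div (by fun_prop (disch := exact hp))
    fun θ => (rpow_pos_of_pos (by positivity) _).ne'
  have hgf (θ : ℝ) (hθ : θ ∈ Set.Icc (-π) π) :=
    div_rpow_bounds_of_le_of_le_mul hr hp (hnorm_pos θ)
      (norm_ofReal_mul_exp_sub_ofReal_le hr htr.le θ)
      (le_norm_ofReal_mul_exp_sub_ofReal ht htr.le (abs_le.2 hθ))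
  obtain ⟨hlow, hup⟩ := integral_div_add_mul_abs_rpow_bounds hd (sub_le_self r ht) pi_pos.le
    (by linarith : 1 < 2 + α)
  rw [show 1 - (2 + α) = -(1 + α) by ring, show 2 + α - 1 = 1 + α by ring] at hlow hup
  constructor
  · exact hlow.trans (intervalIntegral.integral_mono_on (by linarith [pi_pos])
      (hg.intervalIntegrable _ _) (hf.intervalIntegrable _ _) fun θ hθ => (hgf θ hθ).1)
  · calc Icirc α r t ≤ ∫ θ in -π..π, (3 * π / 2) ^ (2 + α) * g θ :=
          intervalIntegral.integral_mono_on (by linarith [pi_pos])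
            (hf.intervalIntegrable _ _) ((continuous_const.mul hg).intervalIntegrable _ _)
            fun θ hθ => (hgf θ hθ).2
      _ ≤ (3 * π / 2) ^ (2 + α) * (2 / (1 + α)) * (r - t) ^ (-(1 + α)) := by
          rw [intervalIntegral.integral_const_mul, mul_assoc]
          gcongr

/-- two-sided bounds on `I_r(x)` for `|x| < r`. -/
theorem Icirc_bounds_inside (α : ℝ) (hα : 0 < α) :
    ∃ a : ℝ, 1 < a ∧ ∀ r : ℝ, 0 < r → ∀ x : ℂ, ‖x‖ < r →
      a⁻¹ * (r - ‖x‖) ^ (-(1 + α)) ≤ Icirc α r x ∧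
      Icirc α r x ≤ a * (r - ‖x‖) ^ (-(1 + α)) := by
  set c₁ := 2 / (1 + α) * (1 - (1 + π) ^ (-(1 + α)))
  set c₂ := (3 * π / 2) ^ (2 + α) * (2 / (1 + α))
  have hc₁ : 0 < c₁ := mul_pos (by positivity)
    (sub_pos.2 (rpow_lt_one_of_one_lt_of_neg (by linarith [pi_pos]) (by linarith)))
  refine ⟨max c₁⁻¹ c₂ + 1, by linarith [le_max_left c₁⁻¹ c₂, inv_pos.2 hc₁], fun r _ x hx => ?_⟩
  obtain ⟨hlow, hup⟩ := Icirc_ofReal_bounds (by linarith : -1 < α) (norm_nonneg x) hx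
  rw [← Icirc_eq_Icirc_norm] at hlow hup
  have hD : 0 ≤ (r - ‖x‖) ^ (-(1 + α)) := rpow_nonneg (by linarith) _
  constructor
  · refine le_trans (mul_le_mul_of_nonneg_right ?_ hD) hlow
    exact inv_le_of_inv_le₀ hc₁ (by linarith [le_max_left c₁⁻¹ c₂])
  · exact hup.trans (mul_le_mul_of_nonneg_right (by linarith [le_max_right c₁⁻¹ c₂]) hD)
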